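/- arXiv:2207.13926 — 8 statements merged into one kernel-verified Lean document; each statement's English description precedes it below -/
import Mathlib

section
/- Let W be an n×n matrix with entries in ℝ ∪ {-∞}, and let δ_W(x)_i = max_j (w_ij + x_j) for x in the hypercube [a,b]^n (with 0 ≤ a < b). Then δ_W maps [a,b]^n into [a,b]^n if and only if W is row-0-astic, i.e., for every row i, max_j w_ij = 0. -/
/-- Max-plus product of a matrix with a real vector: `(W ⊗ x)_i = ⨆ j, w_ij + x_j`. -/
noncomputable def deltaE {n : ℕ} (W : Fin n → Fin n → EReal) (x : Fin n → ℝ) (i : Fin n) : EReal :=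
  ⨆ j, W i j + (x j : EReal)

/-- Min-plus adjoint candidate: `ε_W(y)_i = ⨅ j, y_j - w_ji`. -/
noncomputable def epsE {n : ℕ} (W : Fin n → Fin n → EReal) (y : Fin n → ℝ) (i : Fin n) : EReal :=
  ⨅ j, (y j : EReal) - W j i

/-- Row-0-astic: every row supremum equals 0. -/
def RowAstic {n : ℕ} (W : Fin n → Fin n → EReal) : Prop := ∀ i, (⨆ j, W i j) = 0

/-- Column-0-astic: every column supremum equals 0. -/
def ColAstic {n : ℕ} (W : Fin n → Fin n → EReal) : Prop := ∀ j, (⨆ i, W i j) = 0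

/-- Doubly-0-astic. -/
def DoublyAstic {n : ℕ} (W : Fin n → Fin n → EReal) : Prop := RowAstic W ∧ ColAstic W

/-! By monotonicity, `δ_W` maps the cube `[a,b]^n` into itself iff it sends the constant
vectors `a` and `b` into it; on a constant vector `c` it acts as `(δ_W c)_i = (max_j w_ij) + c`,
so this says exactly that every row maximum is `≥ 0` and `≤ 0`. -/

theorem EReal.iSup_add_coe {ι : Sort*} (f : ι → EReal) (c : ℝ) :
    ⨆ j, f j + (c : EReal) = (⨆ j, f j) + c := by
  refine le_antisymm (iSup_le fun j => add_le_add_left (le_iSup f j) _) ?_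
  rw [← EReal.le_sub_iff_add_le (by simp) (by simp)]
  exact iSup_le fun j => (EReal.le_sub_iff_add_le (by simp) (by simp)).2 (le_iSup (f · + c) j)

theorem EReal.coe_le_add_coe_iff {s : EReal} {c : ℝ} : (c : EReal) ≤ s + c ↔ 0 ≤ s := by
  simpa using (EReal.addLECancellable_coe c).add_le_add_iff_right (b := 0) (c := s)

theorem EReal.add_coe_le_coe_iff {s : EReal} {c : ℝ} : s + c ≤ (c : EReal) ↔ s ≤ 0 := by
  simpa using (EReal.addLECancellable_coe c).add_le_add_iff_right (b := s) (c := 0)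

theorem deltaE_const {n : ℕ} (W : Fin n → Fin n → EReal) (c : ℝ) (i : Fin n) :
    deltaE W (fun _ => c) i = (⨆ j, W i j) + c :=
  EReal.iSup_add_coe _ c

theorem deltaE_mono {n : ℕ} (W : Fin n → Fin n → EReal) (i : Fin n) : Monotone (deltaE W · i) :=
  fun _ _ hxy => iSup_mono fun j => add_le_add_right (EReal.coe_le_coe_iff.2 (hxy j)) _

theorem stmt0_general (n : ℕ) (a b : ℝ) (hab : a < b)
    (W : Fin n → Fin n → EReal) :
    (∀ x : Fin n → ℝ, (∀ i, x i ∈ Set.Icc a b) →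
        ∀ i, deltaE W x i ∈ Set.Icc (a : EReal) (b : EReal)) ↔ RowAstic W := by
  constructor
  · intro hmaps i
    have hlow := (hmaps (fun _ => a) (fun _ => ⟨le_rfl, hab.le⟩) i).1
    have hupp := (hmaps (fun _ => b) (fun _ => ⟨hab.le, le_rfl⟩) i).2
    rw [deltaE_const] at hlow hupp
    exact le_antisymm (EReal.add_coe_le_coe_iff.1 hupp) (EReal.coe_le_add_coe_iff.1 hlow)
  · intro hrow x hx i
    have hlow := deltaE_mono W i (fun j => (hx j).1 : (fun _ => a) ≤ x)
    have hupp := deltaE_mono W i (fun j => (hx j).2 : x ≤ fun _ => b)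
    simp only [deltaE_const, hrow i, zero_add] at hlow hupp
    exact ⟨hlow, hupp⟩

/-- `δ_W` maps `[a,b]^n` into itself iff `W` is row-0-astic. -/
theorem stmt0 (n : ℕ) (hn : 0 < n) (a b : ℝ) (ha : 0 ≤ a) (hab : a < b)
    (W : Fin n → Fin n → EReal) :
    (∀ x : Fin n → ℝ, (∀ i, x i ∈ Set.Icc a b) →
        ∀ i, deltaE W x i ∈ Set.Icc (a : EReal) (b : EReal)) ↔ RowAstic W :=
  stmt0_general n a b hab W
end

section
/- Let W be an n×n max-plus matrix and define ε_W(y)_i = min_j (y_j - w_ji) for y ∈ [a,b]^n (with the convention y_j - (-∞) = +∞). Then ε_W maps [a,b]^n into [a,b]^n and commutes with arbitrary infima if and only if W is column-0-astic, i.e., max_i w_ij = 0 for every column j. -/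
/-- Coercion from `Icc a b` through `ℝ` into `EReal` turns `iInf` into `iInf`. -/
lemma aux_coe_iInf {a b : ℝ} [Fact (a ≤ b)] {ι : Type} [Nonempty ι]
    (f : ι → Set.Icc a b) :
    ((((⨅ i, f i : Set.Icc a b) : ℝ)) : EReal) = ⨅ i, ((f i : ℝ) : EReal) := by
  have hab : a ≤ b := Fact.out
  have h1 : (((⨅ i, f i : Set.Icc a b) : ℝ)) = ⨅ i, ((f i : ℝ)) :=
    Set.Icc.coe_iInf hab
  rw [h1]
  refine Monotone.map_ciInf_of_continuousAt (f := ((↑) : ℝ → EReal))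
    (continuous_coe_real_ereal.continuousAt) (fun x y hxy => EReal.coe_le_coe_iff.2 hxy) ?_
  exact ⟨a, by rintro x ⟨i, rfl⟩; exact (f i).2.1⟩

/-- Subtracting a fixed nonpositive `EReal` from an infimum of reals. -/
lemma aux_iInf_sub {ι : Type} [Nonempty ι] (c : ι → ℝ) (lb : ℝ) (hlb : ∀ i, lb ≤ c i)
    (w : EReal) (hw : w ≤ 0) :
    (⨅ i, (c i : EReal)) - w = ⨅ i, ((c i : EReal) - w) := by
  have hbot : (lb : EReal) ≤ ⨅ i, (c i : EReal) :=
    le_iInf fun i => EReal.coe_le_coe_iff.2 (hlb i)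
  by_cases hb : w = ⊥
  · subst hb
    rw [EReal.sub_bot ((lt_of_lt_of_le (EReal.bot_lt_coe lb) hbot).ne')]
    symm
    simp only [EReal.coe_sub_bot]
    exact iInf_const
  · have ht : w ≠ ⊤ := by
      intro h
      rw [h] at hw
      exact absurd hw (by simp)
    apply le_antisymm
    · exact le_iInf fun i => EReal.sub_le_sub (iInf_le _ i) le_rfl
    · rw [EReal.le_sub_iff_add_le (Or.inl hb) (Or.inl ht)]
      refine le_iInf fun i => ?_
      rw [← EReal.le_sub_iff_add_le (Or.inl hb) (Or.inl ht)]
      exact iInf_le _ i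

/-- `ε_W` maps `[a,b]^n` into itself and commutes with arbitrary infima
iff `W` is column-0-astic. -/
theorem stmt3 (n : ℕ) (hn : 0 < n) (a b : ℝ) [Fact (a ≤ b)] (ha : 0 ≤ a) (hab : a < b)
    (W : Fin n → Fin n → EReal) :
    ((∀ y : Fin n → ℝ, (∀ i, y i ∈ Set.Icc a b) →
        ∀ i, epsE W y i ∈ Set.Icc (a : EReal) (b : EReal)) ∧
      (∀ ε : (Fin n → Set.Icc a b) → (Fin n → Set.Icc a b),
        (∀ y i, ((ε y i : ℝ) : EReal) = epsE W (fun j => (y j : ℝ)) i) →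
        ∀ S : Set (Fin n → Set.Icc a b), ε (sInf S) = sInf (ε '' S)))
    ↔ ColAstic W := by
  have hab' : a ≤ b := hab.le
  have hNE : Nonempty (Fin n) := ⟨⟨0, hn⟩⟩
  constructor
  · rintro ⟨h1, -⟩ j
    -- every entry of column j is ≤ 0
    have hle : ∀ k, W k j ≤ 0 := by
      intro k
      have hA := (h1 (fun _ => a) (fun _ => ⟨le_rfl, hab'⟩) j).1
      have hAk : (a : EReal) ≤ (a : EReal) - W k j := le_trans hA (iInf_le _ k)
      clear hA
      revert hAk
      induction W k j using EReal.rec with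
      | bot => exact fun _ => bot_le
      | coe r =>
        intro hAk
        have h2 : (a : EReal) + (r : EReal) ≤ (a : EReal) := by
          rwa [← EReal.le_sub_iff_add_le (Or.inl (EReal.coe_ne_bot r))
            (Or.inl (EReal.coe_ne_top r))]
        rw [← EReal.coe_add, EReal.coe_le_coe_iff] at h2
        have : r ≤ (0 : ℝ) := by linarith
        exact_mod_cast this
      | top =>
        intro hAk
        rw [EReal.sub_top] at hAk
        exact absurd hAk (EReal.bot_lt_coe a).not_ge
    -- some entry is 0
    have hex : ∃ k, 0 ≤ W k j := by
      by_contra h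
      push_neg at h
      have hB := (h1 (fun _ => b) (fun _ => ⟨hab', le_rfl⟩) j).2
      have hstrict : ∀ k, (b : EReal) < (b : EReal) - W k j := by
        intro k
        have hk := h k
        revert hk
        induction W k j using EReal.rec with
        | bot => intro _; rw [EReal.coe_sub_bot]; exact EReal.coe_lt_top b
        | coe r =>
          intro hk
          have hr : r < 0 := by exact_mod_cast hk
          rw [← EReal.coe_sub, EReal.coe_lt_coe_iff]
          linarith
        | top => intro hk; exact absurd hk (not_lt.2 le_top)
      obtain ⟨k0, hk0⟩ := Finite.exists_min (fun k => (b : EReal) - W k j)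
      have : (b : EReal) - W k0 j ≤ ⨅ k, (b : EReal) - W k j := le_iInf hk0
      exact absurd (this.trans hB) (hstrict k0).not_ge
    obtain ⟨k, hk⟩ := hex
    exact le_antisymm (iSup_le hle) (le_iSup_of_le k hk)
  · intro hW
    -- basic consequences of column-0-asticity
    have hle : ∀ i k, W k i ≤ 0 := fun i k => (le_iSup (fun m => W m i) k).trans (hW i).le
    have hzero : ∀ i, ∃ k, W k i = 0 := by
      intro i
      obtain ⟨k, hk⟩ := Finite.exists_max (fun m => W m i)
      exact ⟨k, le_antisymm (hle i k) ((hW i).symm.le.trans (iSup_le hk))⟩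
    -- the key bounds for epsE on vectors in [a,b]^n
    have hbounds : ∀ y : Fin n → ℝ, (∀ m, y m ∈ Set.Icc a b) →
        ∀ i, epsE W y i ∈ Set.Icc (a : EReal) (b : EReal) := by
      intro y hy i
      constructor
      · refine le_iInf fun k => ?_
        have : (a : EReal) - 0 ≤ (y k : EReal) - W k i :=
          EReal.sub_le_sub (EReal.coe_le_coe_iff.2 (hy k).1) (hle i k)
        simpa using this
      · obtain ⟨k, hk⟩ := hzero i
        refine (iInf_le _ k).trans ?_
        rw [hk]
        simpa using EReal.coe_le_coe_iff.2 (hy k).2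
    refine ⟨hbounds, ?_⟩
    intro ε hε S
    funext i
    apply Subtype.ext
    apply EReal.coe_eq_coe_iff.1
    rw [hε (sInf S) i]
    rcases S.eq_empty_or_nonempty with rfl | hS
    · -- empty case: both sides equal b
      have htop : ∀ j : Fin n, (((sInf (∅ : Set (Fin n → Set.Icc a b)) j : Set.Icc a b) : ℝ)) = b := by
        intro j
        rw [sInf_empty]
        rfl
      have h2 : ((((sInf (ε '' (∅ : Set (Fin n → Set.Icc a b)))) i : Set.Icc a b) : ℝ)) = b := by
        rw [Set.image_empty, sInf_empty]
        rfl
      rw [h2]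
      simp only [htop]
      apply le_antisymm
      · obtain ⟨k, hk⟩ := hzero i
        refine (iInf_le _ k).trans ?_
        rw [hk]
        simp
      · refine le_iInf fun k => ?_
        have : (b : EReal) - 0 ≤ (b : EReal) - W k i := EReal.sub_le_sub le_rfl (hle i k)
        simpa using this
    · have hSne : Nonempty ↥S := hS.to_subtype
      -- LHS: epsE at the pointwise infimum
      have hL : ∀ j : Fin n, (((sInf S j : Set.Icc a b) : ℝ) : EReal)
          = ⨅ y : S, (((y : Fin n → Set.Icc a b) j : ℝ) : EReal) := by
        intro j
        rw [sInf_eq_iInf' S, iInf_apply]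
        exact aux_coe_iInf _
      -- RHS: infimum of images
      have hR : (((sInf (ε '' S) i : Set.Icc a b) : ℝ) : EReal)
          = ⨅ y : S, epsE W (fun m => (((y : Fin n → Set.Icc a b) m : ℝ))) i := by
        rw [sInf_image', iInf_apply]
        rw [aux_coe_iInf (fun y : S => ε (y : Fin n → Set.Icc a b) i)]
        exact iInf_congr fun y => hε _ i
      rw [hR]
      unfold epsE
      simp only [hL]
      rw [iInf_comm]
      refine iInf_congr fun j => ?_
      exact aux_iInf_sub (fun y : S => (((y : Fin n → Set.Icc a b) j : ℝ))) a
        (fun y => ((y : Fin n → Set.Icc a b) j).2.1) (W j i) (hle i j)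
end

section
/- Let W be a doubly-0-astic n×n max-plus matrix. The dilation δ_W is extensive on [a,b]^n (δ_W(x) ≥ x for all x) if and only if W is a Conservative Morphological Weights matrix, i.e., w_ii = 0 for all i and w_ij ≤ 0 for all i,j. -/
/-! The diagonal term alone already gives extensivity; conversely, testing extensivity at the
vector `e⁽ⁱ⁾` (value `b` at `i`, `a` elsewhere) shows that all off-diagonal terms of row `i`
stay at or below `a < b`, so the diagonal term `w_ii + b` must reach `b`. -/

section

variable {n : ℕ}

theorem RowAstic.le_zero {W : Fin n → Fin n → EReal} (hW : RowAstic W) (i j : Fin n) :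
    W i j ≤ 0 :=
  hW i ▸ le_iSup (W i) j

theorem add_le_deltaE (W : Fin n → Fin n → EReal) (x : Fin n → ℝ) (i j : Fin n) :
    W i j + x j ≤ deltaE W x i :=
  le_iSup (fun j => W i j + (x j : EReal)) j

theorem le_deltaE_of_diag_eq_zero {W : Fin n → Fin n → EReal} (hdiag : ∀ i, W i i = 0)
    (x : Fin n → ℝ) (i : Fin n) : (x i : EReal) ≤ deltaE W x i := by
  simpa [hdiag i] using add_le_deltaE W x i i

/-- The vector `e⁽ⁱ⁾`. -/
def pulse (a b : ℝ) (i : Fin n) : Fin n → ℝ :=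
  Function.update (fun _ => a) i b

theorem pulse_mem_Icc {a b : ℝ} (hab : a ≤ b) (i j : Fin n) : pulse a b i j ∈ Set.Icc a b := by
  by_cases h : j = i
  · subst h; simp [pulse, hab]
  · simp [pulse, h, hab]

theorem deltaE_pulse_le {W : Fin n → Fin n → EReal} (hW : ∀ i j, W i j ≤ 0) (a b : ℝ)
    (i : Fin n) : deltaE W (pulse a b i) i ≤ max (a : EReal) (W i i + b) := by
  refine iSup_le fun j => ?_
  by_cases h : j = i
  · subst h; simp [pulse]
  · calc W i j + (pulse a b i j : EReal) ≤ 0 + (a : EReal) := by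
          simpa [pulse, h] using add_le_add_left (hW i j) (a : EReal)
      _ ≤ max (a : EReal) (W i i + b) := by simp

theorem diag_nonneg_of_le_deltaE_pulse {W : Fin n → Fin n → EReal} (hW : ∀ i j, W i j ≤ 0)
    {a b : ℝ} (hab : a < b) {i : Fin n} (hext : (b : EReal) ≤ deltaE W (pulse a b i) i) :
    0 ≤ W i i := by
  by_contra! hneg
  have hdiag : W i i + b < b := by simpa using EReal.add_lt_add_right_coe hneg b
  have hoff : (a : EReal) < b := EReal.coe_lt_coe_iff.mpr hab
  exact (hext.trans (deltaE_pulse_le hW a b i)).not_gt (max_lt hoff hdiag)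

end

theorem stmt5_general (n : ℕ) (a b : ℝ) (hab : a < b)
    (W : Fin n → Fin n → EReal) (hW : DoublyAstic W) :
    (∀ x : Fin n → ℝ, (∀ i, x i ∈ Set.Icc a b) →
        ∀ i, (x i : EReal) ≤ deltaE W x i)
    ↔ ((∀ i, W i i = 0) ∧ (∀ i j, W i j ≤ 0)) := by
  have hle := hW.1.le_zero
  refine ⟨fun hext => ⟨fun i => ?_, hle⟩, fun ⟨hdiag, _⟩ x _ => le_deltaE_of_diag_eq_zero hdiag x⟩
  have hb : (b : EReal) ≤ deltaE W (pulse a b i) i := by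
    simpa [pulse] using hext (pulse a b i) (pulse_mem_Icc hab.le i) i
  exact (hle i i).antisymm (diag_nonneg_of_le_deltaE_pulse hle hab hb)

/-- for doubly-0-astic `W`, the dilation `δ_W` is extensive on `[a,b]^n`
iff `W` is a CMW matrix (`w_ii = 0` and `w_ij ≤ 0`). -/
theorem stmt5 (n : ℕ) (hn : 0 < n) (a b : ℝ) (ha : 0 ≤ a) (hab : a < b)
    (W : Fin n → Fin n → EReal) (hW : DoublyAstic W) :
    (∀ x : Fin n → ℝ, (∀ i, x i ∈ Set.Icc a b) →
        ∀ i, (x i : EReal) ≤ deltaE W x i)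
    ↔ ((∀ i, W i i = 0) ∧ (∀ i j, W i j ≤ 0)) :=
  stmt5_general n a b hab W hW
end

section
/- Every vector x ∈ [a,b]^n decomposes as x = ⋁_{j=1}^n ((x_j − b + e^{(j)}) ∨ a), where the addition of the scalar x_j − b is componentwise and a is the constant vector. -/
/-- every `x ∈ [a,b]^n` decomposes as
`x = ⋁_j ((x_j - b + e^{(j)}) ∨ a)` componentwise. -/
theorem stmt8 (n : ℕ) (hn : 0 < n) (a b : ℝ) (ha : 0 ≤ a) (hab : a < b)
    (x : Fin n → ℝ) (hx : ∀ i, x i ∈ Set.Icc a b) :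
    ∀ i, x i = ⨆ j, max ((x j - b) + (if i = j then b else a)) a := by
  haveI : Nonempty (Fin n) := ⟨⟨0, hn⟩⟩
  intro i
  have hi := hx i
  apply le_antisymm
  · have h1 : x i ≤ max ((x i - b) + (if i = i then b else a)) a := by
      simp
    exact h1.trans (le_ciSup (f := fun j => max ((x j - b) + (if i = j then b else a)) a)
      (Set.Finite.bddAbove (Set.finite_range _)) i)
  · apply ciSup_le
    intro j
    have hj := hx j
    rcases eq_or_ne i j with h | h
    · subst h; simp; exact hi.1
    · simp [h]
      constructor
      · linarith [hj.2, hi.1]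
      · exact hi.1
end

section
/- Let M, W be doubly-0-astic n×n max-plus matrices. Then δ_M = δ_W on [a,b]^n if and only if M ∨ I_{a-b} = W ∨ I_{a-b}, where I_{a-b} is the matrix with all entries equal to a − b and ∨ is the entrywise maximum. Equivalently: m_ij = w_ij whenever w_ij > a − b, and m_ij ≤ a − b whenever w_ij ≤ a − b. -/
lemma key_le {n : ℕ} (hn : 0 < n) (a b : ℝ) (hab : a < b)
    (M W : Fin n → Fin n → EReal) (hWrow : RowAstic W)
    (h : ∀ i j, M i j ⊔ ((a - b : ℝ) : EReal) = W i j ⊔ ((a - b : ℝ) : EReal))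
    (x : Fin n → ℝ) (hx : ∀ i, x i ∈ Set.Icc a b) (i : Fin n) :
    deltaE M x i ≤ deltaE W x i := by
  have : Nonempty (Fin n) := ⟨⟨0, hn⟩⟩
  obtain ⟨j₀, hj₀⟩ := exists_eq_ciSup_of_finite (f := fun j => W i j)
  rw [hWrow i] at hj₀
  apply iSup_le
  intro j
  rcases lt_or_ge (((a - b : ℝ) : EReal)) (M i j) with hc | hc
  · have hMW : M i j = W i j := by
      have h1 : M i j ⊔ ((a - b : ℝ) : EReal) = M i j := sup_eq_left.mpr hc.le
      have h2 := h i j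
      rw [h1] at h2
      rcases lt_or_ge (((a - b : ℝ) : EReal)) (W i j) with hd | hd
      · rw [sup_eq_left.mpr hd.le] at h2; exact h2
      · rw [sup_eq_right.mpr hd] at h2; exact absurd h2.symm hc.ne
    rw [hMW]
    exact le_iSup (fun j => W i j + (x j : EReal)) j
  · have h1 : M i j + (x j : EReal) ≤ ((a - b : ℝ) : EReal) + (b : EReal) :=
      add_le_add hc (by exact_mod_cast (hx j).2)
    have h2 : (((a - b : ℝ) : EReal) + (b : EReal)) = ((a : ℝ) : EReal) := by
      rw [← EReal.coe_add]; norm_num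
    have h3 : ((a : ℝ) : EReal) ≤ W i j₀ + (x j₀ : EReal) := by
      rw [hj₀, zero_add]
      exact_mod_cast (hx j₀).1
    calc M i j + (x j : EReal) ≤ ((a : ℝ) : EReal) := h2 ▸ h1
      _ ≤ W i j₀ + (x j₀ : EReal) := h3
      _ ≤ _ := le_iSup (fun j => W i j + (x j : EReal)) j₀

/-- test vector computation: if `(a-b : EReal) < W i j` and matrices agree on the cube,
then `M i j = W i j`. -/
lemma key_eq {n : ℕ} (hn : 0 < n) (a b : ℝ) (ha : 0 ≤ a) (hab : a < b)
    (M W : Fin n → Fin n → EReal) (hMrow : RowAstic M) (hWrow : RowAstic W)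
    (hδ : ∀ x : Fin n → ℝ, (∀ i, x i ∈ Set.Icc a b) → ∀ i, deltaE M x i = deltaE W x i)
    (i j : Fin n) (hgt : ((a - b : ℝ) : EReal) < W i j) : M i j = W i j := by
  classical
  set x : Fin n → ℝ := fun k => if k = j then b else a with hxdef
  have hx : ∀ k, x k ∈ Set.Icc a b := by
    intro k
    by_cases hk : k = j <;> simp [hxdef, hk, hab.le, le_refl]
  have hxj : (x j : EReal) = (b : ℝ) := by simp [hxdef]
  -- each term of deltaE is ≤ (entry at j + b) ⊔ a
  have hbound : ∀ (V : Fin n → Fin n → EReal), RowAstic V →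
      deltaE V x i ≤ (V i j + (b : EReal)) ⊔ ((a : ℝ) : EReal) := by
    intro V hV
    apply iSup_le
    intro k
    by_cases hk : k = j
    · subst hk
      simp only [hxdef, if_pos rfl]
      exact le_sup_left
    · have hVk : V i k ≤ 0 := by
        rw [← hV i]; exact le_iSup (fun k => V i k) k
      have : V i k + (x k : EReal) ≤ 0 + ((a : ℝ) : EReal) := by
        apply add_le_add hVk
        simp [hxdef, hk]
      rw [zero_add] at this
      exact le_trans this le_sup_right
  have hge : ∀ (V : Fin n → Fin n → EReal), V i j + (b : EReal) ≤ deltaE V x i := by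
    intro V
    calc V i j + (b : EReal) = V i j + (x j : EReal) := by rw [hxj]
      _ ≤ _ := le_iSup (fun k => V i k + (x k : EReal)) j
  have hWb : ((a : ℝ) : EReal) < W i j + (b : EReal) := by
    calc ((a : ℝ) : EReal) = ((a - b : ℝ) : EReal) + (b : EReal) := by
          rw [← EReal.coe_add]; norm_num
      _ < W i j + (b : EReal) := by
          exact EReal.add_lt_add_right_coe hgt b
  have hSW : deltaE W x i = W i j + (b : EReal) := by
    refine le_antisymm ?_ (hge W)
    calc deltaE W x i ≤ (W i j + (b : EReal)) ⊔ ((a : ℝ) : EReal) := hbound W hWrow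
      _ = W i j + (b : EReal) := sup_eq_left.mpr hWb.le
  have hSM := hδ x hx i
  rw [hSW] at hSM
  -- deltaE M x i = W i j + b > a, and deltaE M x i ≤ (M i j + b) ⊔ a, so ≤ M i j + b
  have hMb : W i j + (b : EReal) ≤ M i j + (b : EReal) := by
    have h1 : deltaE M x i ≤ (M i j + (b : EReal)) ⊔ ((a : ℝ) : EReal) := hbound M hMrow
    rw [hSM] at h1
    rcases le_sup_iff.mp h1 with h | h
    · exact h
    · exact absurd h (not_le.mpr hWb)
  have heq : M i j + (b : EReal) = W i j + (b : EReal) :=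
    le_antisymm (hSM ▸ hge M) hMb
  have := congrArg (fun z => z - (b : EReal)) heq
  simpa only [EReal.add_sub_cancel_right] using this

/-- two doubly-0-astic matrices induce the same dilation on `[a,b]^n` iff they
agree after entrywise maximum with the constant matrix `I_{a-b}`; equivalently, they agree on
entries `> a - b` and both are `≤ a - b` elsewhere. -/
theorem stmt9 (n : ℕ) (hn : 0 < n) (a b : ℝ) (ha : 0 ≤ a) (hab : a < b)
    (M W : Fin n → Fin n → EReal) (hM : DoublyAstic M) (hW : DoublyAstic W) :
    ((∀ x : Fin n → ℝ, (∀ i, x i ∈ Set.Icc a b) → ∀ i, deltaE M x i = deltaE W x i)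
      ↔ (∀ i j, M i j ⊔ ((a - b : ℝ) : EReal) = W i j ⊔ ((a - b : ℝ) : EReal)))
    ∧ ((∀ i j, M i j ⊔ ((a - b : ℝ) : EReal) = W i j ⊔ ((a - b : ℝ) : EReal))
      ↔ (∀ i j, (((a - b : ℝ) : EReal) < W i j → M i j = W i j) ∧
          (W i j ≤ ((a - b : ℝ) : EReal) → M i j ≤ ((a - b : ℝ) : EReal)))) := by
  constructor
  · constructor
    · intro hδ i j
      rcases lt_or_ge (((a - b : ℝ) : EReal)) (W i j) with hd | hd
      · rw [key_eq hn a b ha hab M W hM.1 hW.1 hδ i j hd]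
      · rcases lt_or_ge (((a - b : ℝ) : EReal)) (M i j) with hd' | hd'
        · have := key_eq hn a b ha hab W M hW.1 hM.1
            (fun x hx i => (hδ x hx i).symm) i j hd'
          rw [this]
        · rw [sup_eq_right.mpr hd, sup_eq_right.mpr hd']
    · intro h x hx i
      exact le_antisymm (key_le hn a b hab M W hW.1 h x hx i)
        (key_le hn a b hab W M hM.1 (fun i j => (h i j).symm) x hx i)
  · constructor
    · intro h i j
      constructor
      · intro hgt
        have h2 := h i j
        rw [sup_eq_left.mpr hgt.le] at h2
        rcases lt_or_ge (((a - b : ℝ) : EReal)) (M i j) with hd | hd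
        · rwa [sup_eq_left.mpr hd.le] at h2
        · rw [sup_eq_right.mpr hd] at h2; exact absurd h2 hgt.ne
      · intro hle
        have h2 := h i j
        rw [sup_eq_right.mpr hle] at h2
        by_contra hc
        rw [sup_eq_left.mpr (not_le.mp hc).le] at h2
        exact absurd h2 (not_le.mp hc).ne'
    · intro h i j
      rcases lt_or_ge (((a - b : ℝ) : EReal)) (W i j) with hd | hd
      · rw [(h i j).1 hd]
      · rw [sup_eq_right.mpr hd, sup_eq_right.mpr ((h i j).2 hd)]
end

section
/- Let (ε, δ) be an adjunction on a complete lattice. For p ≥ 1 set D_p = ⋁_{k=1}^p δ^k and E_p = ⋀_{k=1}^p ε^k (pointwise sup/inf of iterates) and G_p = D_p ∘ E_p. Then (E_p, D_p) is an adjunction, D_{p+1} = D_p ∘ (id ∨ δ), G_p ∘ D_{p+1} = D_{p+1}, and consequently G_p ∘ G_{p+1} = G_{p+1}, so G_{p+1} ≤ G_p; hence (G_p)_{p≥1} is a granulometry. -/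
/-- `D_p = ⋁_{k=1}^p δ^k` (pointwise). -/
noncomputable def Dop {L : Type*} [CompleteLattice L] (δ : L → L) (p : ℕ) (x : L) : L :=
  ⨆ k ∈ Finset.Icc 1 p, δ^[k] x

/-- `E_p = ⋀_{k=1}^p ε^k` (pointwise). -/
noncomputable def Eop {L : Type*} [CompleteLattice L] (ε : L → L) (p : ℕ) (x : L) : L :=
  ⨅ k ∈ Finset.Icc 1 p, ε^[k] x

lemma gc_iter {L : Type*} [CompleteLattice L] {ε δ : L → L}
    (hadj : ∀ x y : L, δ x ≤ y ↔ x ≤ ε y) (k : ℕ) :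
    GaloisConnection (δ^[k]) (ε^[k]) := by
  induction k with
  | zero => intro x y; simp
  | succ k ih =>
    intro x y
    rw [Function.iterate_succ_apply', Function.iterate_succ_apply, hadj, ih]

lemma gc_D {L : Type*} [CompleteLattice L] {ε δ : L → L}
    (hadj : ∀ x y : L, δ x ≤ y ↔ x ≤ ε y) (p : ℕ) :
    GaloisConnection (Dop δ p) (Eop ε p) := by
  intro x y
  unfold Dop Eop
  rw [iSup₂_le_iff, le_iInf₂_iff]
  exact forall₂_congr fun k _ => gc_iter hadj k x y

lemma D_succ {L : Type*} [CompleteLattice L] {ε δ : L → L}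
    (hadj : ∀ x y : L, δ x ≤ y ↔ x ≤ ε y) {p : ℕ} (hp : 1 ≤ p) (x : L) :
    Dop δ (p + 1) x = Dop δ p (x ⊔ δ x) := by
  unfold Dop
  apply le_antisymm
  · apply iSup₂_le
    intro k hk
    simp only [Finset.mem_Icc] at hk
    rcases Nat.lt_or_ge k (p + 1) with h | h
    · have hkp : k ≤ p := Nat.lt_succ_iff.mp h
      calc δ^[k] x ≤ δ^[k] (x ⊔ δ x) := (gc_iter hadj k).monotone_l le_sup_left
        _ ≤ _ := le_iSup₂_of_le k (Finset.mem_Icc.mpr ⟨hk.1, hkp⟩) le_rfl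
    · have hk1 : k = p + 1 := le_antisymm hk.2 h
      subst hk1
      calc δ^[p+1] x = δ^[p] (δ x) := Function.iterate_succ_apply δ p x
        _ ≤ δ^[p] (x ⊔ δ x) := (gc_iter hadj p).monotone_l le_sup_right
        _ ≤ _ := le_iSup₂_of_le p (Finset.mem_Icc.mpr ⟨hp, le_rfl⟩) le_rfl
  · apply iSup₂_le
    intro k hk
    simp only [Finset.mem_Icc] at hk
    have : δ^[k] (x ⊔ δ x) = δ^[k] x ⊔ δ^[k] (δ x) := (gc_iter hadj k).l_sup
    rw [this, ← Function.iterate_succ_apply δ k x]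
    apply sup_le
    · exact le_iSup₂_of_le k (Finset.mem_Icc.mpr ⟨hk.1, hk.2.trans (Nat.le_succ p)⟩) le_rfl
    · exact le_iSup₂_of_le (k + 1)
        (Finset.mem_Icc.mpr ⟨Nat.le_add_left 1 k, Nat.succ_le_succ hk.2⟩) le_rfl

/-- for an adjunction `(ε, δ)` on a complete lattice, `(E_p, D_p)` is an
adjunction; `D_{p+1} = D_p ∘ (id ∨ δ)`; `G_p ∘ D_{p+1} = D_{p+1}`; hence
`G_p ∘ G_{p+1} = G_{p+1}` and `G_{p+1} ≤ G_p`, so `(G_p)` is a granulometry. -/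
theorem stmt13 {L : Type*} [CompleteLattice L] (ε δ : L → L)
    (hadj : ∀ x y : L, δ x ≤ y ↔ x ≤ ε y) :
    ∀ p : ℕ, 1 ≤ p →
      (∀ x y : L, Dop δ p x ≤ y ↔ x ≤ Eop ε p y) ∧
      (∀ x : L, Dop δ (p + 1) x = Dop δ p (x ⊔ δ x)) ∧
      (∀ x : L, Dop δ p (Eop ε p (Dop δ (p + 1) x)) = Dop δ (p + 1) x) ∧
      (∀ x : L, Dop δ p (Eop ε p (Dop δ (p + 1) (Eop ε (p + 1) x)))
          = Dop δ (p + 1) (Eop ε (p + 1) x)) ∧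
      (∀ x : L, Dop δ (p + 1) (Eop ε (p + 1) x) ≤ Dop δ p (Eop ε p x)) := by
  intro p hp
  have gcp := gc_D hadj (ε := ε) (δ := δ) p
  have h3 : ∀ x : L, Dop δ p (Eop ε p (Dop δ (p + 1) x)) = Dop δ (p + 1) x := by
    intro x
    rw [D_succ hadj hp]
    exact gcp.l_u_l_eq_l _
  refine ⟨fun x y => gcp x y, D_succ hadj hp, h3, fun x => h3 _, ?_⟩
  intro x
  rw [← h3 (Eop ε (p + 1) x)]
  apply gcp.monotone_l
  apply gcp.monotone_u
  exact (gc_D hadj (p + 1)).l_u_le x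
end

section
/- Every row-0-astic (or column-0-astic) n×n max-plus matrix W is definite: every circuit in the graph G(W) has weight ≤ 0, and there exists at least one circuit of weight exactly 0. -/
section Aux

variable {n : ℕ}

lemma entry_le_zero_row {W : Fin n → Fin n → EReal} (h : RowAstic W) (i j : Fin n) :
    W i j ≤ 0 := le_trans (le_iSup (W i) j) (h i).le

lemma entry_le_zero_col {W : Fin n → Fin n → EReal} (h : ColAstic W) (i j : Fin n) :
    W i j ≤ 0 := le_trans (le_iSup (fun k => W k j) i) (h j).le

lemma exists_zero_row (hn : 0 < n) {W : Fin n → Fin n → EReal} (h : RowAstic W) (i : Fin n) :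
    ∃ j, W i j = 0 := by
  haveI : Nonempty (Fin n) := ⟨⟨0, hn⟩⟩
  obtain ⟨j, hj⟩ := Finite.exists_max (W i)
  exact ⟨j, le_antisymm (entry_le_zero_row h i j) ((h i).symm.le.trans (iSup_le hj))⟩

lemma exists_zero_col (hn : 0 < n) {W : Fin n → Fin n → EReal} (h : ColAstic W) (j : Fin n) :
    ∃ i, W i j = 0 := by
  haveI : Nonempty (Fin n) := ⟨⟨0, hn⟩⟩
  obtain ⟨i, hi⟩ := Finite.exists_max (fun k => W k j)
  exact ⟨i, le_antisymm (entry_le_zero_col h i j) ((h j).symm.le.trans (iSup_le hi))⟩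

lemma pigeon (hn : 0 < n) (f : Fin n → Fin n) :
    ∃ a b : ℕ, a < b ∧ f^[a] ⟨0, hn⟩ = f^[b] ⟨0, hn⟩ := by
  have h : Fintype.card (Fin n) < Fintype.card (Fin (n + 1)) := by simp
  obtain ⟨a, b, hab, he⟩ :=
    Fintype.exists_ne_map_eq_of_card_lt (fun q : Fin (n + 1) => f^[(q : ℕ)] ⟨0, hn⟩) h
  rcases lt_or_gt_of_ne (fun hh => hab (by exact hh)) with h' | h'
  · exact ⟨a, b, h', he⟩
  · exact ⟨b, a, h', he.symm⟩

end Aux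

/-- every row-0-astic or column-0-astic matrix is definite: all circuits of
`G(W)` have weight `≤ 0`, and some circuit has weight exactly `0`. -/
theorem stmt16 (n : ℕ) (hn : 0 < n) (W : Fin n → Fin n → EReal)
    (hW : RowAstic W ∨ ColAstic W) :
    (∀ p : ℕ, 1 ≤ p → ∀ c : ℕ → Fin n, c 0 = c p →
      (∑ q ∈ Finset.range p, W (c q) (c (q + 1))) ≤ 0) ∧
    (∃ p : ℕ, 1 ≤ p ∧ ∃ c : ℕ → Fin n, c 0 = c p ∧
      (∑ q ∈ Finset.range p, W (c q) (c (q + 1))) = 0) := by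
  have hle : ∀ i j, W i j ≤ 0 := by
    rcases hW with h | h
    · exact entry_le_zero_row h
    · exact fun i j => entry_le_zero_col h i j
  constructor
  · intro p _ c _
    exact Finset.sum_nonpos fun q _ => hle _ _
  · rcases hW with h | h
    · -- row case: follow zero edges forward
      choose f hf using exists_zero_row hn h
      obtain ⟨a, b, hab, he⟩ := pigeon hn f
      refine ⟨b - a, by omega, fun q => f^[a + q] ⟨0, hn⟩, ?_, ?_⟩
      · simp only [Nat.add_zero]
        rw [show a + (b - a) = b by omega]
        exact he
      · refine Finset.sum_eq_zero fun q _ => ?_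
        show W (f^[a + q] ⟨0, hn⟩) (f^[a + (q + 1)] ⟨0, hn⟩) = 0
        rw [show a + (q + 1) = (a + q) + 1 by omega, Function.iterate_succ_apply']
        exact hf _
    · -- column case: follow zero edges backward
      choose g hg using exists_zero_col hn h
      obtain ⟨a, b, hab, he⟩ := pigeon hn g
      refine ⟨b - a, by omega, fun q => g^[b - q] ⟨0, hn⟩, ?_, ?_⟩
      · simp only [Nat.sub_zero]
        rw [show b - (b - a) = a by omega]
        exact he.symm
      · refine Finset.sum_eq_zero fun q hq => ?_
        have hq' : q < b - a := Finset.mem_range.mp hq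
        show W (g^[b - q] ⟨0, hn⟩) (g^[b - (q + 1)] ⟨0, hn⟩) = 0
        rw [show b - q = (b - (q + 1)) + 1 by omega, Function.iterate_succ_apply']
        exact hg _
end

section
/- Let W be a symmetric doubly-0-astic n×n max-plus matrix and Δ(W) = ⋁_{k=1}^n W^k. Then Δ(W) is idempotent for the max-plus product: Δ(W) ⊗ Δ(W) = Δ(W). Consequently the operators D = δ_{Δ(W)} and E = ε_{Δ(W)} on [a,b]^n are idempotent, D is a closing, E is an opening, and E = D ∘ E. -/
/-- Max-plus matrix product. -/
noncomputable def matMul {n : ℕ} (A B : Fin n → Fin n → EReal) : Fin n → Fin n → EReal :=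
  fun i j => ⨆ k, A i k + B k j

/-- Max-plus matrix power (`matPow W 0` is the max-plus identity). -/
noncomputable def matPow {n : ℕ} (W : Fin n → Fin n → EReal) : ℕ → (Fin n → Fin n → EReal)
  | 0 => fun i j => if i = j then 0 else ⊥
  | p + 1 => matMul W (matPow W p)

/-- Max-plus product of a matrix with an extended-real vector. -/
noncomputable def deltaF {n : ℕ} (W : Fin n → Fin n → EReal) (x : Fin n → EReal) (i : Fin n) :
    EReal :=
  ⨆ j, W i j + x j

/-- Adjoint erosion acting on extended-real vectors. -/
noncomputable def epsF {n : ℕ} (W : Fin n → Fin n → EReal) (y : Fin n → EReal) (i : Fin n) :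
    EReal :=
  ⨅ j, y j - W j i

/-
Read `Δ(W)` as the heaviest weight of a walk of length `1, …, n` in the graph weighted by `W`.
Row-0-asticity gives `W ≤ 0`, so cycles have nonpositive weight and cutting one out of a walk
never lowers its weight; by pigeonhole every walk of length `≥ n` can be shortened. Symmetry
makes the diagonal of `Δ(W)` zero (go `i → k → i` along a zero entry `W i k`), so every power
`W^m`, including `W^0`, lies below `Δ(W)`, and `Δ(W) ⊗ Δ(W) = ⋁ W^(p+q) ≤ Δ(W)`.
A zero diagonal and this triangle inequality make `D = δ_Δ` a closing; `D` and `E = ε_Δ` are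
adjoint on vectors with finite entries, which turns `D ∘ D = D` into `E ∘ E = E` and `E = D ∘ E`.
-/

open Finset

variable {n : ℕ}

section MaxPlusPowers

variable {W : Fin n → Fin n → EReal}

theorem matPow_succ_apply (W : Fin n → Fin n → EReal) (m : ℕ) (i j : Fin n) :
    matPow W (m + 1) i j = ⨆ k, W i k + matPow W m k j :=
  rfl

theorem matPow_one (W : Fin n → Fin n → EReal) : matPow W 1 = W := by
  funext i j
  refine le_antisymm (iSup_le fun k => ?_) (le_iSup_of_le j (by simp [matPow]))
  by_cases h : k = j <;> simp [matPow, h]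

theorem matPow_add_le (W : Fin n → Fin n → EReal) (a b : ℕ) (i k j : Fin n) :
    matPow W a i k + matPow W b k j ≤ matPow W (a + b) i j := by
  induction a generalizing i with
  | zero => by_cases h : i = k <;> simp [matPow, h]
  | succ a ih =>
    have : Nonempty (Fin n) := ⟨i⟩
    obtain ⟨l, hl⟩ := exists_eq_ciSup_of_finite (f := fun l => W i l + matPow W a l k)
    rw [matPow_succ_apply, ← hl, add_assoc, Nat.add_right_comm, matPow_succ_apply]
    exact le_iSup_of_le l (add_le_add le_rfl (ih l))

theorem nonpos_of_rowAstic (hW : RowAstic W) (i j : Fin n) : W i j ≤ 0 :=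
  (le_iSup (W i) j).trans_eq (hW i)

theorem matPow_nonpos (hW0 : ∀ i j, W i j ≤ 0) (m : ℕ) (i j : Fin n) : matPow W m i j ≤ 0 := by
  induction m generalizing i with
  | zero => by_cases h : i = j <;> simp [matPow, h]
  | succ m ih => exact iSup_le fun k => add_nonpos (hW0 i k) (ih k)

end MaxPlusPowers

section Walks

variable {W : Fin n → Fin n → EReal}

noncomputable def walkWeight (W : Fin n → Fin n → EReal) (p : ℕ → Fin n) (m : ℕ) : EReal :=
  ∑ t ∈ range m, W (p t) (p (t + 1))

theorem walkWeight_add (W : Fin n → Fin n → EReal) (p : ℕ → Fin n) (a b : ℕ) :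
    walkWeight W p (a + b) = walkWeight W p a + walkWeight W (fun u => p (a + u)) b := by
  simp only [walkWeight, sum_range_add, add_assoc]

theorem walkWeight_nonpos (hW0 : ∀ i j, W i j ≤ 0) (p : ℕ → Fin n) (m : ℕ) :
    walkWeight W p m ≤ 0 :=
  sum_nonpos fun _ _ => hW0 _ _

theorem walkWeight_le_matPow (W : Fin n → Fin n → EReal) (p : ℕ → Fin n) (m : ℕ) :
    walkWeight W p m ≤ matPow W m (p 0) (p m) := by
  induction m with
  | zero => simp [walkWeight, matPow]
  | succ m ih =>
    rw [walkWeight_add]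
    refine (add_le_add ih ?_).trans (matPow_add_le W m 1 _ _ _)
    simp [walkWeight, matPow_one]

theorem exists_walk_of_matPow_ne_bot {m : ℕ} {i j : Fin n} (h : matPow W m i j ≠ ⊥) :
    ∃ p : ℕ → Fin n, p 0 = i ∧ p m = j ∧ matPow W m i j ≤ walkWeight W p m := by
  induction m generalizing i with
  | zero =>
    have hij : i = j := by
      by_contra hij
      simp [matPow, hij] at h
    subst hij
    exact ⟨fun _ => i, rfl, rfl, by simp [walkWeight, matPow]⟩
  | succ m ih =>
    have : Nonempty (Fin n) := ⟨i⟩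
    obtain ⟨k, hk⟩ := exists_eq_ciSup_of_finite (f := fun k => W i k + matPow W m k j)
    rw [matPow_succ_apply, ← hk] at h ⊢
    obtain ⟨p, hp0, hpm, hp⟩ := ih (i := k) (fun hb => h (by rw [hb, EReal.add_bot]))
    refine ⟨fun u => if u = 0 then i else p (u - 1), rfl, by simpa using hpm, ?_⟩
    rw [add_comm m 1, walkWeight_add]
    simpa [walkWeight, hp0] using add_le_add le_rfl hp

/-- Pigeonhole: a walk of length `m ≥ n` repeats a vertex, and removing the cycle in between,
of nonpositive weight, shortens it. -/
theorem exists_lt_matPow_le (hW0 : ∀ i j, W i j ≤ 0) {m : ℕ} (hm : n ≤ m) (i j : Fin n) :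
    ∃ m' < m, matPow W m i j ≤ matPow W m' i j := by
  have hm0 : 0 < m := i.pos.trans_le hm
  by_cases hbot : matPow W m i j = ⊥
  · exact ⟨0, hm0, by simp [hbot]⟩
  obtain ⟨p, hp0, hpm, hp⟩ := exists_walk_of_matPow_ne_bot hbot
  obtain ⟨s, t, hst, htm, hpst⟩ : ∃ s t : ℕ, s < t ∧ t ≤ m ∧ p s = p t := by
    obtain ⟨s, t, hne, heq⟩ :=
      Fintype.exists_ne_map_eq_of_card_lt (fun t : Fin (m + 1) => p t) (by simp; omega)
    rcases Fin.lt_or_lt_of_ne hne with h | h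
    · exact ⟨s, t, h, by omega, heq⟩
    · exact ⟨t, s, h, by omega, heq.symm⟩
  obtain ⟨d, rfl⟩ : ∃ d, t = s + d := ⟨t - s, by omega⟩
  obtain ⟨r, rfl⟩ : ∃ r, m = s + d + r := ⟨m - (s + d), by omega⟩
  have hcycle := walkWeight_nonpos hW0 (fun u => p (s + u)) d
  have hprefix := walkWeight_le_matPow W p s
  have hsuffix := walkWeight_le_matPow W (fun u => p (s + d + u)) r
  simp only [add_zero, ← hpst, hp0, hpm] at hprefix hsuffix
  refine ⟨s + r, by omega, ?_⟩
  calc matPow W (s + d + r) i j ≤ walkWeight W p (s + d + r) := hp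
    _ = walkWeight W p s + walkWeight W (fun u => p (s + u)) d
          + walkWeight W (fun u => p (s + d + u)) r := by
        rw [walkWeight_add, walkWeight_add]
    _ ≤ matPow W s i (p s) + 0 + matPow W r (p s) j := by gcongr
    _ ≤ matPow W (s + r) i j := by rw [add_zero]; exact matPow_add_le W s r i _ j

theorem exists_lt_card_matPow_le (hW0 : ∀ i j, W i j ≤ 0) (m : ℕ) (i j : Fin n) :
    ∃ m' < n, matPow W m i j ≤ matPow W m' i j := by
  induction m using Nat.strong_induction_on with
  | _ m ih =>
    rcases lt_or_ge m n with hm | hm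
    · exact ⟨m, hm, le_rfl⟩
    · obtain ⟨m', hm', h⟩ := exists_lt_matPow_le hW0 hm i j
      obtain ⟨m'', hm'', h'⟩ := ih m' hm'
      exact ⟨m'', hm'', h.trans h'⟩

end Walks

section MetricMatrix

variable {W : Fin n → Fin n → EReal}

noncomputable def metricMatrix (W : Fin n → Fin n → EReal) : Fin n → Fin n → EReal :=
  fun i j => ⨆ k ∈ Icc 1 n, matPow W k i j

theorem matPow_le_metricMatrix_of_mem {k : ℕ} (hk : k ∈ Icc 1 n) (i j : Fin n) :
    matPow W k i j ≤ metricMatrix W i j :=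
  le_iSup₂_of_le k hk le_rfl

theorem exists_metricMatrix_eq_matPow (W : Fin n → Fin n → EReal) (i j : Fin n) :
    ∃ k ∈ Icc 1 n, metricMatrix W i j = matPow W k i j := by
  obtain ⟨k, hk, h⟩ := exists_mem_eq_sup (Icc 1 n) ⟨1, mem_Icc.2 ⟨le_rfl, i.pos⟩⟩
    (fun k => matPow W k i j)
  exact ⟨k, hk, (Finset.sup_eq_iSup _ _).symm.trans h⟩

theorem metricMatrix_nonpos (hW0 : ∀ i j, W i j ≤ 0) (i j : Fin n) : metricMatrix W i j ≤ 0 :=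
  iSup₂_le fun k _ => matPow_nonpos hW0 k i j

theorem metricMatrix_self (hsym : ∀ i j, W i j = W j i) (hW : RowAstic W) (i : Fin n) :
    metricMatrix W i i = 0 := by
  refine le_antisymm (metricMatrix_nonpos (nonpos_of_rowAstic hW) i i) ?_
  have : Nonempty (Fin n) := ⟨i⟩
  obtain ⟨k, hk⟩ := exists_eq_ciSup_of_finite (f := W i)
  rw [hW i] at hk
  by_cases hki : k = i
  · subst hki
    refine le_of_eq_of_le ?_ (matPow_le_metricMatrix_of_mem (mem_Icc.2 ⟨le_rfl, k.pos⟩) k k)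
    rw [matPow_one, hk]
  · have h2n : 2 ≤ n := by
      have := Fin.val_ne_of_ne hki
      omega
    calc (0 : EReal) = matPow W 1 i k + matPow W 1 k i := by rw [matPow_one, hsym k i, hk, add_zero]
      _ ≤ matPow W 2 i i := matPow_add_le W 1 1 i k i
      _ ≤ metricMatrix W i i := matPow_le_metricMatrix_of_mem (mem_Icc.2 ⟨by norm_num, h2n⟩) i i

theorem matPow_le_metricMatrix (hW0 : ∀ i j, W i j ≤ 0) (hdiag : ∀ i, metricMatrix W i i = 0)
    (m : ℕ) (i j : Fin n) : matPow W m i j ≤ metricMatrix W i j := by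
  obtain ⟨m', hm', h⟩ := exists_lt_card_matPow_le hW0 m i j
  refine h.trans ?_
  rcases Nat.eq_zero_or_pos m' with rfl | hpos
  · by_cases hij : i = j
    · subst hij
      simp [matPow, hdiag]
    · simp [matPow, hij]
  · exact matPow_le_metricMatrix_of_mem (mem_Icc.2 ⟨hpos, hm'.le⟩) i j

theorem metricMatrix_triangle (hW0 : ∀ i j, W i j ≤ 0) (hdiag : ∀ i, metricMatrix W i i = 0)
    (i k j : Fin n) : metricMatrix W i k + metricMatrix W k j ≤ metricMatrix W i j := by
  obtain ⟨p, -, hp⟩ := exists_metricMatrix_eq_matPow W i k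
  obtain ⟨q, -, hq⟩ := exists_metricMatrix_eq_matPow W k j
  rw [hp, hq]
  exact (matPow_add_le W p q i k j).trans (matPow_le_metricMatrix hW0 hdiag _ i j)

theorem metricMatrix_mul_self (hW0 : ∀ i j, W i j ≤ 0) (hdiag : ∀ i, metricMatrix W i i = 0) :
    matMul (metricMatrix W) (metricMatrix W) = metricMatrix W := by
  funext i j
  refine le_antisymm (iSup_le fun k => metricMatrix_triangle hW0 hdiag i k j) ?_
  exact le_iSup_of_le j (by rw [hdiag, add_zero])

end MetricMatrix

section DilationErosion

variable {A : Fin n → Fin n → EReal}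

theorem deltaF_mono (A : Fin n → Fin n → EReal) : Monotone (deltaF A) :=
  fun _ _ hxy _ => iSup_mono fun j => add_le_add le_rfl (hxy j)

theorem epsF_mono (A : Fin n → Fin n → EReal) : Monotone (epsF A) :=
  fun _ _ hxy _ => iInf_mono fun j => EReal.sub_le_sub (hxy j) le_rfl

theorem le_deltaF (hdiag : ∀ i, A i i = 0) (x : Fin n → EReal) : x ≤ deltaF A x :=
  fun i => le_iSup_of_le i (by rw [hdiag, zero_add])

theorem epsF_le (hdiag : ∀ i, A i i = 0) (x : Fin n → EReal) : epsF A x ≤ x :=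
  fun i => iInf_le_of_le i (by rw [hdiag, sub_zero])

theorem deltaF_deltaF (hdiag : ∀ i, A i i = 0) (htri : ∀ i j k, A i j + A j k ≤ A i k)
    (x : Fin n → EReal) : deltaF A (deltaF A x) = deltaF A x := by
  funext i
  refine le_antisymm (iSup_le fun j => ?_) (le_deltaF hdiag _ i)
  have : Nonempty (Fin n) := ⟨i⟩
  obtain ⟨k, hk⟩ := exists_eq_ciSup_of_finite (f := fun k => A j k + x k)
  rw [deltaF, ← hk, ← add_assoc]
  exact le_iSup_of_le k (add_le_add (htri i j k) le_rfl)

/-- Finiteness of `z` matters: in `EReal`, `⊥ - ⊥ = ⊥`. -/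
theorem deltaF_le_iff_le_epsF {y z : Fin n → EReal} (hz : ∀ i, z i ≠ ⊥ ∧ z i ≠ ⊤) :
    deltaF A y ≤ z ↔ y ≤ epsF A z := by
  simp only [Pi.le_def, deltaF, epsF, iSup_le_iff, le_iInf_iff]
  rw [forall_comm]
  refine forall₂_congr fun j i => ?_
  rw [EReal.le_sub_iff_add_le (.inr (hz i).1) (.inr (hz i).2), add_comm]

theorem deltaF_epsF (hdiag : ∀ i, A i i = 0) (htri : ∀ i j k, A i j + A j k ≤ A i k)
    {x : Fin n → EReal} (hx : ∀ i, x i ≠ ⊥ ∧ x i ≠ ⊤) :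
    deltaF A (epsF A x) = epsF A x := by
  refine le_antisymm ((deltaF_le_iff_le_epsF hx).1 ?_) (le_deltaF hdiag _)
  rw [deltaF_deltaF hdiag htri]
  exact (deltaF_le_iff_le_epsF hx).2 le_rfl

theorem epsF_epsF (hdiag : ∀ i, A i i = 0) (htri : ∀ i j k, A i j + A j k ≤ A i k)
    {x : Fin n → EReal} (hx : ∀ i, x i ≠ ⊥ ∧ x i ≠ ⊤) (hεx : ∀ i, epsF A x i ≠ ⊥ ∧ epsF A x i ≠ ⊤) :
    epsF A (epsF A x) = epsF A x :=
  le_antisymm (epsF_le hdiag _) ((deltaF_le_iff_le_epsF hεx).1 (deltaF_epsF hdiag htri hx).le)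

theorem epsF_mem_Icc (hA0 : ∀ i j, A i j ≤ 0) (hdiag : ∀ i, A i i = 0) {c d : EReal}
    {x : Fin n → EReal} (hx : ∀ i, c ≤ x i ∧ x i ≤ d) (i : Fin n) :
    c ≤ epsF A x i ∧ epsF A x i ≤ d := by
  refine ⟨le_iInf fun k => (hx k).1.trans ?_, (epsF_le hdiag x i).trans (hx i).2⟩
  simpa using EReal.sub_le_sub (le_refl (x k)) (hA0 k i)

end DilationErosion

theorem stmt19_general (n : ℕ) (a b : ℝ)
    (W : Fin n → Fin n → EReal) (hsym : ∀ i j, W i j = W j i) (hW : DoublyAstic W)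
    (Δ : Fin n → Fin n → EReal) (hΔ : Δ = fun i j => ⨆ k ∈ Finset.Icc 1 n, matPow W k i j) :
    (matMul Δ Δ = Δ) ∧
    -- D and E are monotone on extended-real vectors
    (∀ x y : Fin n → EReal, x ≤ y → deltaF Δ x ≤ deltaF Δ y) ∧
    (∀ x y : Fin n → EReal, x ≤ y → epsF Δ x ≤ epsF Δ y) ∧
    -- on the hypercube: D extensive and idempotent (a closing), E anti-extensive and
    -- idempotent (an opening), and E = D ∘ E
    (∀ x : Fin n → EReal, (∀ i, (a : EReal) ≤ x i ∧ x i ≤ (b : EReal)) →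
      (x ≤ deltaF Δ x) ∧
      (deltaF Δ (deltaF Δ x) = deltaF Δ x) ∧
      (epsF Δ x ≤ x) ∧
      (epsF Δ (epsF Δ x) = epsF Δ x) ∧
      (deltaF Δ (epsF Δ x) = epsF Δ x)) := by
  obtain rfl : Δ = metricMatrix W := hΔ
  have hW0 := nonpos_of_rowAstic hW.1
  have hdiag := metricMatrix_self hsym hW.1
  have htri : ∀ i j k, metricMatrix W i j + metricMatrix W j k ≤ metricMatrix W i k :=
    metricMatrix_triangle hW0 hdiag
  have finite_of_mem_cube : ∀ y : Fin n → EReal, (∀ i, (a : EReal) ≤ y i ∧ y i ≤ b) →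
      ∀ i, y i ≠ ⊥ ∧ y i ≠ ⊤ := fun y hy i =>
    ⟨ne_bot_of_le_ne_bot (EReal.coe_ne_bot a) (hy i).1,
      ne_top_of_le_ne_top (EReal.coe_ne_top b) (hy i).2⟩
  refine ⟨metricMatrix_mul_self hW0 hdiag, fun x y => (deltaF_mono _ ·),
    fun x y => (epsF_mono _ ·), fun x hx => ?_⟩
  have hεx := finite_of_mem_cube _ (epsF_mem_Icc (metricMatrix_nonpos hW0) hdiag hx)
  replace hx := finite_of_mem_cube x hx
  exact ⟨le_deltaF hdiag x, deltaF_deltaF hdiag htri x, epsF_le hdiag x,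
    epsF_epsF hdiag htri hx hεx, deltaF_epsF hdiag htri hx⟩

/-- for a symmetric doubly-0-astic `W`, the metric matrix
`Δ = Δ(W) = ⋁_{k=1}^n W^k` is max-plus idempotent (`Δ ⊗ Δ = Δ`); consequently, on the
hypercube, `D = δ_Δ` and `E = ε_Δ` are idempotent, `D` is a closing (increasing, extensive,
idempotent), `E` is an opening (increasing, anti-extensive, idempotent), and `E = D ∘ E`. -/
theorem stmt19 (n : ℕ) (hn : 0 < n) (a b : ℝ) (ha : 0 ≤ a) (hab : a < b)
    (W : Fin n → Fin n → EReal) (hsym : ∀ i j, W i j = W j i) (hW : DoublyAstic W)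
    (Δ : Fin n → Fin n → EReal) (hΔ : Δ = fun i j => ⨆ k ∈ Finset.Icc 1 n, matPow W k i j) :
    (matMul Δ Δ = Δ) ∧
    -- D and E are monotone on extended-real vectors
    (∀ x y : Fin n → EReal, x ≤ y → deltaF Δ x ≤ deltaF Δ y) ∧
    (∀ x y : Fin n → EReal, x ≤ y → epsF Δ x ≤ epsF Δ y) ∧
    -- on the hypercube: D extensive and idempotent (a closing), E anti-extensive and
    -- idempotent (an opening), and E = D ∘ E
    (∀ x : Fin n → EReal, (∀ i, (a : EReal) ≤ x i ∧ x i ≤ (b : EReal)) →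
      (x ≤ deltaF Δ x) ∧
      (deltaF Δ (deltaF Δ x) = deltaF Δ x) ∧
      (epsF Δ x ≤ x) ∧
      (epsF Δ (epsF Δ x) = epsF Δ x) ∧
      (deltaF Δ (epsF Δ x) = epsF Δ x)) :=
  stmt19_general n a b W hsym hW Δ hΔ
end
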